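/- arXiv:1601.01361 — 5 statements merged into one kernel-verified Lean document; each statement's English description precedes it below -/
import Mathlib

section
/- Let (L, ‖·‖) be a lattice over A = k[t] of rank n (i.e. L is a finitely generated A-module with a norm such that L_{≤r} := {x ∈ L : ‖x‖ ≤ r} is a finite-dimensional k-vector space for all r ∈ ℝ). For 1 ≤ i ≤ n, let R_i be the set of values max{‖x₁‖,...,‖x_i‖} over all A-linearly independent families x₁,...,x_i ∈ L. Then inf(R_i) exists and is attained by some family of vectors in L. -/
set_option linter.unusedSectionVars false

noncomputable def degA {k : Type*} [Field k] (a : Polynomial k) : WithBot ℝ :=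
  WithBot.map (fun n : ℕ => (n : ℝ)) a.degree

lemma degA_C {k : Type*} [Field k] {c : k} (hc : c ≠ 0) : degA (Polynomial.C c) = 0 := by
  simp [degA, Polynomial.degree_C hc]

lemma degA_neg_one {k : Type*} [Field k] : degA (-1 : Polynomial k) = 0 := by
  simp [degA]

section aux
variable {k : Type*} [Field k] {L : Type*} [AddCommGroup L]
    [Module (Polynomial k) L] [Module k L] [IsScalarTower k (Polynomial k) L]
    (N : L → WithBot ℝ)
    (hadd : ∀ x y : L, N (x + y) ≤ max (N x) (N y))
    (hsmul : ∀ (a : Polynomial k) (x : L), N (a • x) = degA a + N x)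
    (hzero : ∀ x : L, N x = ⊥ ↔ x = 0)

include hsmul in
lemma aux_neg (x : L) : N (-x) = N x := by
  have h := hsmul (-1) x
  rw [neg_one_smul, degA_neg_one, zero_add] at h
  exact h

include hadd hzero in
lemma aux_sum_le {ι : Type*} (s : Finset ι) (f : ι → L) :
    N (∑ j ∈ s, f j) ≤ s.sup fun j => N (f j) := by
  classical
  induction s using Finset.cons_induction with
  | empty => simp [(hzero 0).2 rfl]
  | cons a s ha ih =>
    rw [Finset.sum_cons, Finset.sup_cons]
    exact le_trans (hadd _ _) (max_le_max le_rfl ih)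

include hadd hsmul hzero in
lemma aux_dominant {ι : Type*} (s : Finset ι) (f : ι → L) (j₀ : ι) (hj₀ : j₀ ∈ s)
    (hne : N (f j₀) ≠ ⊥)
    (hlt : ∀ j ∈ s, j ≠ j₀ → N (f j) < N (f j₀)) :
    N (∑ j ∈ s, f j) = N (f j₀) := by
  classical
  have hle : N (∑ j ∈ s, f j) ≤ N (f j₀) := by
    refine le_trans (aux_sum_le N hadd hzero s f) (Finset.sup_le ?_)
    intro j hj
    rcases eq_or_ne j j₀ with h | h
    · exact h ▸ le_rfl
    · exact (hlt j hj h).le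
  have hrest : N (∑ j ∈ s.erase j₀, f j) < N (f j₀) := by
    refine lt_of_le_of_lt (aux_sum_le N hadd hzero _ f) ?_
    rw [Finset.sup_lt_iff (Ne.bot_lt hne)]
    intro j hj
    exact hlt j (Finset.mem_of_mem_erase hj) (Finset.ne_of_mem_erase hj)
  have hdecomp : f j₀ = (∑ j ∈ s, f j) + -(∑ j ∈ s.erase j₀, f j) := by
    rw [← Finset.add_sum_erase s f hj₀]; abel
  have h1 : N (f j₀) ≤ max (N (∑ j ∈ s, f j)) (N (∑ j ∈ s.erase j₀, f j)) := by
    calc N (f j₀) ≤ max (N (∑ j ∈ s, f j)) (N (-(∑ j ∈ s.erase j₀, f j))) := by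
          rw [hdecomp]; exact hadd _ _
      _ = _ := by rw [aux_neg N hsmul]
  exact le_antisymm hle ((le_max_iff.mp h1).resolve_right (not_le.mpr hrest))

include hadd hsmul hzero in
lemma aux_li {ι : Type*} (x : ι → L) (hx : ∀ j, x j ≠ 0)
    (hdist : Function.Injective fun j => N (x j)) :
    LinearIndependent k x := by
  classical
  rw [linearIndependent_iff']
  intro s g hsum j hj
  by_contra hg
  set t := s.filter fun j => g j ≠ 0 with ht
  have hjt : j ∈ t := Finset.mem_filter.mpr ⟨hj, hg⟩
  have hNsmul : ∀ j' ∈ t, N (g j' • x j') = N (x j') := by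
    intro j' hj'
    have hgj : g j' ≠ 0 := (Finset.mem_filter.mp hj').2
    have hcs : g j' • x j' = (Polynomial.C (g j')) • x j' := by
      rw [← Polynomial.algebraMap_eq, algebraMap_smul]
    rw [hcs, hsmul, degA_C hgj, zero_add]
  obtain ⟨j₀, hj₀t, hj₀max⟩ := Finset.exists_max_image t (fun j' => N (x j')) ⟨j, hjt⟩
  have hbot : N (x j₀) ≠ ⊥ := fun h => hx j₀ ((hzero _).mp h)
  have hdom : N (∑ j' ∈ t, g j' • x j') = N (g j₀ • x j₀) := by
    refine aux_dominant N hadd hsmul hzero t _ j₀ hj₀t ?_ ?_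
    · rw [hNsmul j₀ hj₀t]; exact hbot
    · intro j' hj' hne
      rw [hNsmul j' hj', hNsmul j₀ hj₀t]
      exact lt_of_le_of_ne (hj₀max j' hj') (fun h => hne (hdist h))
  have hts : ∑ j' ∈ t, g j' • x j' = ∑ j' ∈ s, g j' • x j' := by
    refine Finset.sum_subset (Finset.filter_subset _ _) ?_
    intro j' hj' hnt
    have : g j' = 0 := by
      by_contra h
      exact hnt (Finset.mem_filter.mpr ⟨hj', h⟩)
    rw [this, zero_smul]
  rw [hts, hsum, (hzero 0).mpr rfl] at hdom
  rw [hNsmul j₀ hj₀t] at hdom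
  exact hbot hdom.symm

include hadd hsmul hzero in
lemma aux_finvals
    (hfin : ∀ r : ℝ, ∃ S : Finset L,
      {x : L | N x ≤ (r : ℝ)} ⊆ (Submodule.span k (S : Set L) : Set L)) (r : ℝ) :
    {w : WithBot ℝ | w ≤ (r : ℝ) ∧ ∃ x : L, x ≠ 0 ∧ N x = w}.Finite := by
  classical
  obtain ⟨S, hS⟩ := hfin r
  set Vs := {w : WithBot ℝ | w ≤ (r : ℝ) ∧ ∃ x : L, x ≠ 0 ∧ N x = w} with hVs
  have hrep : ∀ w : Vs, ∃ x : L, x ≠ 0 ∧ N x = (w : WithBot ℝ) := fun w => w.2.2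
  choose x hx0 hxN using hrep
  set V := Submodule.span k (S : Set L) with hV
  haveI : FiniteDimensional k V := FiniteDimensional.span_of_finite k S.finite_toSet
  have hmem : ∀ w : Vs, x w ∈ V := by
    intro w
    apply hS
    rw [Set.mem_setOf_eq, hxN w]
    exact w.2.1
  set y : Vs → V := fun w => ⟨x w, hmem w⟩ with hy
  have hinj : Function.Injective fun w : Vs => N (x w) := by
    intro a b h
    apply Subtype.ext
    rw [← hxN a, ← hxN b]
    exact h
  have hliL : LinearIndependent k x := aux_li N hadd hsmul hzero x hx0 hinj
  have hli : LinearIndependent k y := by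
    apply LinearIndependent.of_comp V.subtype
    exact hliL
  have : Finite Vs := hli.finite
  exact Set.finite_coe_iff.mp this

end aux

/-- For a lattice `(L, ‖·‖)` over `A = k[t]` of rank `n`, and `1 ≤ i ≤ n`,
the set `R_i` of values `max{‖x₁‖,…,‖x_i‖}` over `A`-linearly independent families has an
infimum which is attained (i.e. `R_i` has a least element). -/
theorem stmt1 {k : Type*} [Field k] {L : Type*} [AddCommGroup L]
    [Module (Polynomial k) L] [Module k L] [IsScalarTower k (Polynomial k) L]
    [Module.Finite (Polynomial k) L]
    (N : L → WithBot ℝ)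
    (hadd : ∀ x y : L, N (x + y) ≤ max (N x) (N y))
    (hsmul : ∀ (a : Polynomial k) (x : L), N (a • x) = degA a + N x)
    (hzero : ∀ x : L, N x = ⊥ ↔ x = 0)
    (hfin : ∀ r : ℝ, ∃ S : Finset L,
      {x : L | N x ≤ (r : ℝ)} ⊆ (Submodule.span k (S : Set L) : Set L))
    (n : ℕ) (b : Fin n → L) (hb : LinearIndependent (Polynomial k) b)
    (i : ℕ) (hi1 : 1 ≤ i) (hin : i ≤ n) :
    ∃ v : WithBot ℝ, IsLeast {w : WithBot ℝ | ∃ x : Fin i → L,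
      LinearIndependent (Polynomial k) x ∧
        Finset.univ.sup (fun j => N (x j)) = w} v := by
  classical
  haveI : Nonempty (Fin i) := ⟨⟨0, hi1⟩⟩
  set R := {w : WithBot ℝ | ∃ x : Fin i → L,
      LinearIndependent (Polynomial k) x ∧
        Finset.univ.sup (fun j => N (x j)) = w} with hR
  have hbi : LinearIndependent (Polynomial k) (fun j : Fin i => b (Fin.castLE hin j)) :=
    hb.comp _ (Fin.castLE_injective hin)
  set w₀ := Finset.univ.sup fun j : Fin i => N (b (Fin.castLE hin j)) with hw₀
  have hw₀R : w₀ ∈ R := ⟨_, hbi, rfl⟩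
  obtain ⟨r, hr⟩ : ∃ r : ℝ, w₀ ≤ (r : ℝ) := by
    cases w₀ with
    | bot => exact ⟨0, bot_le⟩
    | coe s => exact ⟨s, le_rfl⟩
  have hval : ∀ w ∈ R, ∃ x : L, x ≠ 0 ∧ N x = w := by
    rintro w ⟨x, hx, rfl⟩
    obtain ⟨j₀, _, hj₀⟩ := Finset.exists_mem_eq_sup Finset.univ Finset.univ_nonempty
      fun j => N (x j)
    exact ⟨x j₀, hx.ne_zero j₀, hj₀.symm⟩
  have hsub : R ∩ Set.Iic w₀ ⊆ {w : WithBot ℝ | w ≤ (r : ℝ) ∧ ∃ x : L, x ≠ 0 ∧ N x = w} := by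
    rintro w ⟨hwR, hwle⟩
    exact ⟨le_trans hwle hr, hval w hwR⟩
  have hfinR : (R ∩ Set.Iic w₀).Finite :=
    (aux_finvals N hadd hsmul hzero hfin r).subset hsub
  have hneR : (R ∩ Set.Iic w₀).Nonempty := ⟨w₀, hw₀R, Set.mem_Iic.mpr le_rfl⟩
  obtain ⟨m, hm, hmin⟩ := Set.exists_min_image _ id hfinR hneR
  refine ⟨m, hm.1, ?_⟩
  intro w hw
  rcases le_total w w₀ with h | h
  · exact hmin w ⟨hw, h⟩
  · exact le_trans (hmin w₀ ⟨hw₀R, Set.mem_Iic.mpr le_rfl⟩) h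
end

section
/- Let B = (b₁,...,b_n) be a reduced basis of a normed space E over K = k(t), ordered with r₁ = ‖b₁‖ ≤ ... ≤ r_n = ‖b_n‖, and let L = ⟨B⟩_A be the A-lattice generated by B. Then r₁ ≤ ... ≤ r_n are the successive minima of L. -/
open scoped Classical in
/-- The degree function `|·| = -v_∞` on `K = k(t)`, with `|0| = -∞`. -/
noncomputable def degK {k : Type*} [Field k] (a : RatFunc k) : WithBot ℝ :=
  if a = 0 then ⊥ else ((a.intDegree : ℝ) : WithBot ℝ)

/-- For a reduced basis `b₁,…,b_n` of a normed space `E` over `K = k(t)`,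
ordered with `r₁ ≤ ⋯ ≤ r_n`, the values `r₁,…,r_n` are the successive minima of the
lattice `L = ⟨b₁,…,b_n⟩_A`. -/
theorem stmt5 {k : Type*} [Field k] {E : Type*} [AddCommGroup E]
    [Module (RatFunc k) E] [Module (Polynomial k) E] [Module k E]
    [IsScalarTower (Polynomial k) (RatFunc k) E] [IsScalarTower k (RatFunc k) E]
    (N : E → WithBot ℝ)
    (hadd : ∀ x y : E, N (x + y) ≤ max (N x) (N y))
    (hsmul : ∀ (a : RatFunc k) (x : E), N (a • x) = degK a + N x)
    (hzero : ∀ x : E, N x = ⊥ ↔ x = 0)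
    (hlat : ∃ s : Finset E, Submodule.span (RatFunc k) (s : Set E) = ⊤ ∧
      ∀ r : ℝ, ∃ S : Finset E,
        {x : E | x ∈ Submodule.span (Polynomial k) (s : Set E) ∧ N x ≤ (r : ℝ)} ⊆
          (Submodule.span k (S : Set E) : Set E))
    (n : ℕ) (b : Fin n → E)
    (hbasis : LinearIndependent (RatFunc k) b ∧
      Submodule.span (RatFunc k) (Set.range b) = ⊤)
    (hred : ∀ a : Fin n → RatFunc k,
      N (∑ i, a i • b i) = Finset.univ.sup (fun i => degK (a i) + N (b i)))
    (r : Fin n → ℝ) (hr : ∀ i, N (b i) = ((r i : ℝ) : WithBot ℝ)) (hmono : Monotone r) :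
    ∀ i : Fin n, IsLeast
      {w : WithBot ℝ | ∃ x : Fin (i.1 + 1) → E,
        (∀ j, x j ∈ Submodule.span (Polynomial k) (Set.range b)) ∧
        LinearIndependent (Polynomial k) x ∧
        Finset.univ.sup (fun j => N (x j)) = w}
      ((r i : ℝ) : WithBot ℝ) := by
  intro i
  have hin : i.1 + 1 ≤ n := i.2
  constructor
  · -- membership: take x = b ∘ Fin.castLE
    refine ⟨b ∘ Fin.castLE hin, fun j => Submodule.subset_span ⟨_, rfl⟩, ?_, ?_⟩
    · rw [LinearIndependent.iff_fractionRing (Polynomial k) (RatFunc k)]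
      exact hbasis.1.comp _ (Fin.castLE_injective hin)
    · apply le_antisymm
      · refine Finset.sup_le fun j _ => ?_
        rw [Function.comp_apply, hr]
        exact_mod_cast hmono (show Fin.castLE hin j ≤ i from Fin.le_def.mpr (by
          simpa using Nat.lt_succ_iff.mp j.2))
      · have h1 := Finset.le_sup (f := fun j => N ((b ∘ Fin.castLE hin) j))
          (Finset.mem_univ (Fin.last i.1))
        have h2 : Fin.castLE hin (Fin.last i.1) = i := Fin.ext rfl
        simpa [h2, hr] using h1
  · -- lower bound
    rintro w ⟨x, hxmem, hxli, rfl⟩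
    choose c hc using fun j => (Submodule.mem_span_range_iff_exists_fun (Polynomial k)).mp (hxmem j)
    have claim : ∃ j l, i.1 ≤ l.1 ∧ c j l ≠ 0 := by
      by_contra hcon
      push_neg at hcon
      have hile : i.1 ≤ n := le_of_lt i.2
      set v : Fin i.1 → E := b ∘ Fin.castLE hile with hv
      have hxw : ∀ j, x j ∈ Submodule.span (RatFunc k) (Set.range v) := by
        intro j
        rw [← hc j]
        refine Submodule.sum_mem _ fun l _ => ?_
        by_cases hl : l.1 < i.1
        · have hb : b l ∈ Set.range v := ⟨⟨l.1, hl⟩, by simp [hv, Fin.ext_iff]⟩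
          have : c j l • b l =
              (algebraMap (Polynomial k) (RatFunc k) (c j l)) • b l :=
            (IsScalarTower.algebraMap_smul _ _ _).symm
          rw [this]
          exact Submodule.smul_mem _ _ (Submodule.subset_span hb)
        · rw [hcon j l (le_of_not_gt hl), zero_smul]
          exact Submodule.zero_mem _
      have hliK : LinearIndependent (RatFunc k) x :=
        (LinearIndependent.iff_fractionRing (Polynomial k) (RatFunc k)).mp hxli
      have hliW : LinearIndependent (RatFunc k)
          (fun j => (⟨x j, hxw j⟩ : Submodule.span (RatFunc k) (Set.range v))) :=
        LinearIndependent.of_comp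
          (Submodule.span (RatFunc k) (Set.range v)).subtype hliK
      haveI : Module.Finite (RatFunc k) (Submodule.span (RatFunc k) (Set.range v)) :=
        Module.Finite.span_of_finite _ (Set.finite_range v)
      have h1 : i.1 + 1 ≤
          Module.finrank (RatFunc k) (Submodule.span (RatFunc k) (Set.range v)) := by
        simpa using hliW.fintype_card_le_finrank
      have h2 : Module.finrank (RatFunc k) (Submodule.span (RatFunc k) (Set.range v)) ≤
          i.1 := by
        haveI := (Set.finite_range v).fintype
        refine (finrank_span_le_card _).trans ?_
        rw [Set.toFinset_card]
        simpa using Fintype.card_range_le v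
      omega
    obtain ⟨j, l, hl, hcl⟩ := claim
    have hxj : N (x j) = Finset.univ.sup
        (fun l => degK (algebraMap (Polynomial k) (RatFunc k) (c j l)) + N (b l)) := by
      rw [← hc j]
      rw [show (∑ l, c j l • b l) =
          ∑ l, (algebraMap (Polynomial k) (RatFunc k) (c j l)) • b l from
        Finset.sum_congr rfl fun l _ => (IsScalarTower.algebraMap_smul _ _ _).symm]
      exact hred _
    have key : ((r i : ℝ) : WithBot ℝ) ≤ N (x j) := by
      rw [hxj]
      refine le_trans ?_ (Finset.le_sup (Finset.mem_univ l))
      have hne : algebraMap (Polynomial k) (RatFunc k) (c j l) ≠ 0 := by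
        simpa using hcl
      rw [degK, if_neg hne, RatFunc.intDegree_polynomial, hr l, ← WithBot.coe_add,
        WithBot.coe_le_coe]
      have h0 : (0 : ℝ) ≤ ((c j l).natDegree : ℤ) := by positivity
      have hrl : r i ≤ r l := hmono (Fin.le_def.mpr hl)
      push_cast
      linarith
    exact key.trans (Finset.le_sup (f := fun j => N (x j)) (Finset.mem_univ j))
end

section
/- Let B = (b₁,...,b_n) be a reduced basis of a normed space E over K = k(t) with ‖b_i‖ = r_i, let L = ⟨B⟩_A, and fix r ∈ ℝ. Let r₀ = -∞, r_{n+1} = ∞, and let κ be the index with r_κ ≤ r < r_{κ+1}. Then {b_i t^{j} : 1 ≤ i ≤ κ, 0 ≤ j ≤ ⌊r - r_i⌋} is a k-basis of L_{≤r} and dim_k L_{≤r} = Σ_{i=1}^{κ}(⌊r - r_i⌋ + 1). -/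
lemma degK_algebraMap {k : Type*} [Field k] {p : Polynomial k} (hp : p ≠ 0) :
    degK (algebraMap (Polynomial k) (RatFunc k) p) = ((p.natDegree : ℝ) : WithBot ℝ) := by
  rw [degK, if_neg (RatFunc.algebraMap_ne_zero hp), RatFunc.intDegree_polynomial]
  norm_num

lemma algebraMap_C_eq {k : Type*} [Field k] (a : k) :
    algebraMap (Polynomial k) (RatFunc k) (Polynomial.C a) = algebraMap k (RatFunc k) a := by
  conv_rhs => rw [RatFunc.algebraMap_apply]
  rw [map_one, div_one, Polynomial.algebraMap_eq]

/-- For a reduced basis `b₁,…,b_n` (with `‖b_i‖ = r_i`, increasingly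
ordered) of a normed space `E` over `K = k(t)` and `L = ⟨b₁,…,b_n⟩_A`, for any real `r`
the family `{t^j • b_i : r_i ≤ r, 0 ≤ j ≤ ⌊r - r_i⌋}` is a `k`-basis of `L_{≤ r}`, and
`dim_k L_{≤ r} = ∑_{r_i ≤ r} (⌊r - r_i⌋ + 1)`. -/
theorem stmt6 {k : Type*} [Field k] {E : Type*} [AddCommGroup E]
    [Module (RatFunc k) E] [Module (Polynomial k) E] [Module k E]
    [IsScalarTower (Polynomial k) (RatFunc k) E] [IsScalarTower k (RatFunc k) E]
    (N : E → WithBot ℝ)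
    (hadd : ∀ x y : E, N (x + y) ≤ max (N x) (N y))
    (hsmul : ∀ (a : RatFunc k) (x : E), N (a • x) = degK a + N x)
    (hzero : ∀ x : E, N x = ⊥ ↔ x = 0)
    (hlat : ∃ s : Finset E, Submodule.span (RatFunc k) (s : Set E) = ⊤ ∧
      ∀ r : ℝ, ∃ S : Finset E,
        {x : E | x ∈ Submodule.span (Polynomial k) (s : Set E) ∧ N x ≤ (r : ℝ)} ⊆
          (Submodule.span k (S : Set E) : Set E))
    (n : ℕ) (b : Fin n → E)
    (hbasis : LinearIndependent (RatFunc k) b ∧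
      Submodule.span (RatFunc k) (Set.range b) = ⊤)
    (hred : ∀ a : Fin n → RatFunc k,
      N (∑ i, a i • b i) = Finset.univ.sup (fun i => degK (a i) + N (b i)))
    (r : Fin n → ℝ) (hr : ∀ i, N (b i) = ((r i : ℝ) : WithBot ℝ)) (hmono : Monotone r)
    (rr : ℝ)
    (f : {p : Fin n × ℕ // r p.1 ≤ rr ∧ (p.2 : ℤ) ≤ ⌊rr - r p.1⌋} → E)
    (hf : ∀ p, f p = (Polynomial.X ^ p.1.2 : Polynomial k) • b p.1.1) :
    LinearIndependent k f ∧
    (Submodule.span k (Set.range f) : Set E) =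
      {x : E | x ∈ Submodule.span (Polynomial k) (Set.range b) ∧ N x ≤ ((rr : ℝ) : WithBot ℝ)} ∧
    (Module.finrank k (Submodule.span k (Set.range f)) : ℤ) =
      ∑ i ∈ Finset.univ.filter (fun i : Fin n => r i ≤ rr), (⌊rr - r i⌋ + 1) := by
  classical
  -- `C a • y = a • y`
  have hCsmul : ∀ (a : k) (y : E), (Polynomial.C a) • y = a • y := by
    intro a y
    rw [← algebraMap_smul (RatFunc k) (Polynomial.C a) y, ← algebraMap_smul (RatFunc k) a y,
      algebraMap_C_eq]
  -- linear independence
  have hXli : LinearIndependent k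
      (fun j : ℕ => algebraMap (Polynomial k) (RatFunc k) (Polynomial.X ^ j)) := by
    have h1 : LinearIndependent k (fun j : ℕ => (Polynomial.X : Polynomial k) ^ j) := by
      have := (Polynomial.basisMonomials k).linearIndependent
      rw [Polynomial.coe_basisMonomials] at this
      simpa [Polynomial.X_pow_eq_monomial] using this
    exact h1.map' (IsScalarTower.toAlgHom k (Polynomial k) (RatFunc k)).toLinearMap
      (LinearMap.ker_eq_bot.mpr (RatFunc.algebraMap_injective k))
  have hgli : LinearIndependent k
      (fun p : Fin n × ℕ => (Polynomial.X ^ p.2 : Polynomial k) • b p.1) := by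
    have h2 := linearIndependent_smul hXli hbasis.1
    have h3 := h2.comp (Prod.swap : Fin n × ℕ → ℕ × Fin n) Prod.swap_injective
    convert h3 using 1
    funext p
    exact (algebraMap_smul (RatFunc k) _ _).symm
  have hli : LinearIndependent k f := by
    have hfe : f = (fun p : Fin n × ℕ => (Polynomial.X ^ p.2 : Polynomial k) • b p.1) ∘
        (Subtype.val) := funext fun p => hf p
    rw [hfe]
    exact hgli.comp _ Subtype.val_injective
  -- the target set as a k-submodule
  set S : Set E := {x : E | x ∈ Submodule.span (Polynomial k) (Set.range b) ∧
      N x ≤ ((rr : ℝ) : WithBot ℝ)} with hS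
  have hsmulk : ∀ (c : k) (x : E), x ∈ S → c • x ∈ S := by
    rintro c x ⟨hx1, hx2⟩
    refine ⟨by rw [← hCsmul]; exact Submodule.smul_mem _ _ hx1, ?_⟩
    rw [← algebraMap_smul (RatFunc k) c x, hsmul]
    by_cases hc : c = 0
    · simp [hc, degK]
    · have : degK (algebraMap k (RatFunc k) c) = ((0 : ℝ) : WithBot ℝ) := by
        rw [← algebraMap_C_eq, degK_algebraMap (by simpa using hc)]
        simp
      rw [this]
      calc ((0:ℝ) : WithBot ℝ) + N x ≤ 0 + ((rr : ℝ) : WithBot ℝ) := by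
            exact add_le_add le_rfl hx2
        _ = ((rr : ℝ) : WithBot ℝ) := by rw [zero_add]
  let T : Submodule k E :=
    { carrier := S
      add_mem' := by
        rintro x y ⟨hx1, hx2⟩ ⟨hy1, hy2⟩
        exact ⟨Submodule.add_mem _ hx1 hy1, le_trans (hadd x y) (max_le hx2 hy2)⟩
      zero_mem' := ⟨Submodule.zero_mem _, by rw [(hzero 0).mpr rfl]; exact bot_le⟩
      smul_mem' := fun c x hx => hsmulk c x hx }
  -- range f ⊆ S
  have hrangesub : Set.range f ⊆ S := by
    rintro _ ⟨p, rfl⟩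
    obtain ⟨⟨i, j⟩, hpi, hpj⟩ := p
    constructor
    · rw [hf]
      exact Submodule.smul_mem _ _ (Submodule.subset_span (Set.mem_range_self _))
    · rw [hf, ← algebraMap_smul (RatFunc k), hsmul, hr,
        degK_algebraMap (pow_ne_zero _ Polynomial.X_ne_zero), Polynomial.natDegree_X_pow]
      rw [← WithBot.coe_add, WithBot.coe_le_coe]
      have : ((j : ℤ) : ℝ) ≤ rr - r i := le_trans (by exact_mod_cast hpj) (Int.floor_le _)
      push_cast at this ⊢
      linarith
  -- set equality
  have hseteq : (Submodule.span k (Set.range f) : Set E) = S := by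
    apply Set.Subset.antisymm
    · exact (Submodule.span_le (p := T)).mpr hrangesub
    · rintro x ⟨hx1, hx2⟩
      rw [Submodule.mem_span_range_iff_exists_fun] at hx1
      obtain ⟨c, hc⟩ := hx1
      have hcK : ∑ i, c i • b i =
          ∑ i, (algebraMap (Polynomial k) (RatFunc k) (c i)) • b i := by
        simp [algebraMap_smul]
      have hNx : N x = Finset.univ.sup
          (fun i => degK (algebraMap (Polynomial k) (RatFunc k) (c i)) + N (b i)) := by
        rw [← hc, hcK, hred]
      have hile : ∀ i : Fin n,
          degK (algebraMap (Polynomial k) (RatFunc k) (c i)) + ((r i : ℝ) : WithBot ℝ)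
            ≤ ((rr : ℝ) : WithBot ℝ) := by
        intro i
        rw [← hr i]
        have hsup : Finset.univ.sup
            (fun i => degK (algebraMap (Polynomial k) (RatFunc k) (c i)) + N (b i))
              ≤ ((rr : ℝ) : WithBot ℝ) := by rw [← hNx]; exact hx2
        exact le_trans (Finset.le_sup
          (f := fun i => degK (algebraMap (Polynomial k) (RatFunc k) (c i)) + N (b i))
          (Finset.mem_univ i)) hsup
      rw [← hc]
      apply Submodule.sum_mem
      intro i _
      by_cases hci : c i = 0
      · simp [hci]
      · -- degree bounds
        have hi := hile i
        rw [degK_algebraMap hci, ← WithBot.coe_add, WithBot.coe_le_coe] at hi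
        have hd2 : r i ≤ rr := by
          have : (0:ℝ) ≤ ((c i).natDegree : ℝ) := Nat.cast_nonneg _
          linarith
        have hd1 : ∀ j : ℕ, j ≤ (c i).natDegree → (j : ℤ) ≤ ⌊rr - r i⌋ := by
          intro j hj
          apply Int.le_floor.mpr
          have : ((j : ℤ) : ℝ) ≤ ((c i).natDegree : ℝ) := by exact_mod_cast hj
          linarith
        -- expand c i in monomials
        have hexp : c i • b i = ∑ j ∈ Finset.range ((c i).natDegree + 1),
            (c i).coeff j • ((Polynomial.X ^ j : Polynomial k) • b i) := by
          conv_lhs => rw [Polynomial.as_sum_range_C_mul_X_pow (c i)]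
          rw [Finset.sum_smul]
          refine Finset.sum_congr rfl fun j _ => ?_
          rw [mul_smul, hCsmul]
        rw [hexp]
        apply Submodule.sum_mem
        intro j hj
        apply Submodule.smul_mem
        apply Submodule.subset_span
        refine ⟨⟨(i, j), hd2, hd1 j (Nat.lt_succ_iff.mp (Finset.mem_range.mp hj))⟩, ?_⟩
        rw [hf]
  refine ⟨hli, hseteq, ?_⟩
  -- dimension count
  set m : Fin n → ℕ := fun i => if r i ≤ rr then (⌊rr - r i⌋).toNat + 1 else 0 with hm
  have hfloor : ∀ i : Fin n, r i ≤ rr → ((⌊rr - r i⌋).toNat : ℤ) = ⌊rr - r i⌋ := fun i h =>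
    Int.toNat_of_nonneg (Int.floor_nonneg.mpr (sub_nonneg.mpr h))
  let e : {p : Fin n × ℕ // r p.1 ≤ rr ∧ (p.2 : ℤ) ≤ ⌊rr - r p.1⌋} ≃ (Σ i : Fin n, Fin (m i)) :=
    { toFun := fun p => ⟨p.1.1, ⟨p.1.2, by
        have h1 := p.2.1
        have h2 := p.2.2
        show p.1.2 < (if r p.1.1 ≤ rr then (⌊rr - r p.1.1⌋).toNat + 1 else 0)
        rw [if_pos h1]
        have : (p.1.2 : ℤ) ≤ ((⌊rr - r p.1.1⌋).toNat : ℤ) := by rw [hfloor _ h1]; exact h2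
        omega⟩⟩
      invFun := fun q => ⟨(q.1, q.2.1), by
        have hq : (q.2 : ℕ) < (if r q.1 ≤ rr then (⌊rr - r q.1⌋).toNat + 1 else 0) := q.2.2
        by_cases h : r q.1 ≤ rr
        · refine ⟨h, ?_⟩
          rw [if_pos h] at hq
          have : (q.2.1 : ℤ) ≤ ((⌊rr - r q.1⌋).toNat : ℤ) := by exact_mod_cast Nat.lt_succ_iff.mp hq
          rwa [hfloor _ h] at this
        · exfalso
          rw [if_neg h] at hq
          omega⟩
      left_inv := fun p => rfl
      right_inv := fun q => rfl }
  haveI : Fintype {p : Fin n × ℕ // r p.1 ≤ rr ∧ (p.2 : ℤ) ≤ ⌊rr - r p.1⌋} :=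
    Fintype.ofEquiv _ e.symm
  rw [finrank_span_eq_card hli]
  have hcard : Fintype.card {p : Fin n × ℕ // r p.1 ≤ rr ∧ (p.2 : ℤ) ≤ ⌊rr - r p.1⌋}
      = ∑ i : Fin n, m i := by
    rw [Fintype.card_congr e, Fintype.card_sigma]
    simp
  rw [hcard]
  push_cast
  rw [Finset.sum_filter]
  refine Finset.sum_congr rfl fun i _ => ?_
  have : (m i : ℤ) = ((if r i ≤ rr then (⌊rr - r i⌋).toNat + 1 else 0 : ℕ) : ℤ) := rfl
  rw [this]
  by_cases h : r i ≤ rr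
  · rw [if_pos h, if_pos h]
    push_cast
    rw [hfloor i h]
  · rw [if_neg h, if_neg h]
    simp
end

section
/- Let B = (b₁,...,b_n) be a basis of a normed space E over K = k(t), partitioned as B = ∪_ρ B_ρ where B_ρ = {b ∈ B : ‖b‖ + ℤ = ρ} for ρ ∈ ℝ/ℤ. Then B is reduced if and only if every subset B_ρ is reduced. -/
set_option maxHeartbeats 1000000


section Aux
variable {E : Type*} [AddCommGroup E] (N : E → WithBot ℝ)

lemma key_two (hadd : ∀ x y : E, N (x + y) ≤ max (N x) (N y))
    (hneg : ∀ x : E, N (-x) = N x) {x y : E} (h : N y < N x) :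
    N (x + y) = N x := by
  refine le_antisymm ((hadd x y).trans (max_le le_rfl h.le)) ?_
  have h2 : N x ≤ max (N (x + y)) (N y) := by
    have := hadd (x + y) (-y)
    rw [hneg] at this
    simpa using this
  rcases le_total (N y) (N (x + y)) with hc | hc
  · simpa [max_eq_left hc] using h2
  · exact absurd ((h2.trans (max_le hc le_rfl)).trans_lt h) (lt_irrefl _)

lemma key_sum {ι : Type*} (hadd : ∀ x y : E, N (x + y) ≤ max (N x) (N y))
    (hneg : ∀ x : E, N (-x) = N x) (hbot : ∀ x : E, N x = ⊥ ↔ x = 0)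
    (s : Finset ι) (f : ι → E)
    (hpw : ∀ i ∈ s, ∀ j ∈ s, i ≠ j → N (f i) = N (f j) → N (f i) = ⊥) :
    N (∑ i ∈ s, f i) = s.sup (fun i => N (f i)) := by
  classical
  revert hpw
  induction s using Finset.strongInduction with
  | _ s ih =>
    intro hpw
    rcases s.eq_empty_or_nonempty with rfl | hs
    · simpa using (hbot 0).mpr rfl
    obtain ⟨i0, hi0, hmax⟩ := Finset.exists_mem_eq_sup s hs (fun i => N (f i))
    by_cases hb : s.sup (fun i => N (f i)) = ⊥
    · have : ∀ i ∈ s, f i = 0 := fun i hi =>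
        (hbot _).mp (le_bot_iff.mp (hb ▸ Finset.le_sup (f := fun i => N (f i)) hi))
      rw [Finset.sum_congr rfl this, Finset.sum_const_zero, hb]
      exact (hbot 0).mpr rfl
    · have hlt : ∀ j ∈ s.erase i0, N (f j) < N (f i0) := by
        intro j hj
        have hjs := Finset.mem_of_mem_erase hj
        have hle : N (f j) ≤ N (f i0) := hmax ▸ Finset.le_sup (f := fun i => N (f i)) hjs
        rcases hle.lt_or_eq with h | h
        · exact h
        · exact absurd ((hpw i0 hi0 j hjs (Finset.ne_of_mem_erase hj).symm h.symm).symm ▸ hb)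
            (by simp [hmax, h])
      have hne : ⊥ < N (f i0) := by
        rw [← hmax]; exact lt_of_le_of_ne bot_le (Ne.symm hb)
      have hsup_lt : (s.erase i0).sup (fun i => N (f i)) < N (f i0) :=
        (Finset.sup_lt_iff hne).mpr hlt
      have hrec := ih (s.erase i0) (Finset.erase_ssubset hi0)
        (fun i hi j hj hij => hpw i (Finset.mem_of_mem_erase hi) j (Finset.mem_of_mem_erase hj) hij)
      rw [← Finset.add_sum_erase s f hi0, key_two N hadd hneg (hrec ▸ hsup_lt), hmax]
end Aux

/-- A basis `b₁,…,b_n` of a normed space `E` over `K = k(t)` is reduced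
iff each subfamily `B_ρ` (vectors whose norm lies in the coset `ρ ∈ ℝ/ℤ`) is reduced.
A subfamily is encoded via linear combinations supported on it. -/
theorem stmt9 {k : Type*} [Field k] {E : Type*} [AddCommGroup E]
    [Module (RatFunc k) E] [Module (Polynomial k) E] [Module k E]
    [IsScalarTower (Polynomial k) (RatFunc k) E] [IsScalarTower k (RatFunc k) E]
    (N : E → WithBot ℝ)
    (hadd : ∀ x y : E, N (x + y) ≤ max (N x) (N y))
    (hsmul : ∀ (a : RatFunc k) (x : E), N (a • x) = degK a + N x)
    (hzero : ∀ x : E, N x = ⊥ ↔ x = 0)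
    (hlat : ∃ s : Finset E, Submodule.span (RatFunc k) (s : Set E) = ⊤ ∧
      ∀ r : ℝ, ∃ S : Finset E,
        {x : E | x ∈ Submodule.span (Polynomial k) (s : Set E) ∧ N x ≤ (r : ℝ)} ⊆
          (Submodule.span k (S : Set E) : Set E))
    (n : ℕ) (b : Fin n → E)
    (hbasis : LinearIndependent (RatFunc k) b ∧
      Submodule.span (RatFunc k) (Set.range b) = ⊤)
    (r : Fin n → ℝ) (hr : ∀ i, N (b i) = ((r i : ℝ) : WithBot ℝ)) :
    (∀ a : Fin n → RatFunc k,
        N (∑ i, a i • b i) = Finset.univ.sup (fun i => degK (a i) + N (b i))) ↔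
    (∀ ρ : ℝ, ∀ a : Fin n → RatFunc k, (∀ i, ¬ (∃ m : ℤ, r i = ρ + m) → a i = 0) →
        N (∑ i, a i • b i) = Finset.univ.sup (fun i => degK (a i) + N (b i))) := by
  classical
  have hneg : ∀ x : E, N (-x) = N x := by
    intro x
    have hx : -x = (-1 : RatFunc k) • x := by rw [neg_smul, one_smul]
    rw [hx, hsmul]
    have : degK (-1 : RatFunc k) = (0 : WithBot ℝ) := by
      simp [degK, RatFunc.intDegree_neg, RatFunc.intDegree_one]
    rw [this, zero_add]
  constructor
  · intro h ρ a _
    exact h a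
  · intro h a
    set φ : Fin n → AddCircle (1 : ℝ) := fun i => ((r i : ℝ) : AddCircle (1 : ℝ)) with hφ
    have phi_eq : ∀ i j : Fin n, φ i = φ j ↔ ∃ m : ℤ, r i = r j + m := by
      intro i j
      rw [hφ]
      simp only [AddCircle]
      rw [QuotientAddGroup.eq, AddSubgroup.mem_zmultiples_iff]
      constructor
      · rintro ⟨m, hm⟩
        refine ⟨-m, ?_⟩
        have : (m : ℝ) = -(r i) + r j := by simpa using hm
        push_cast
        linarith
      · rintro ⟨m, hm⟩
        refine ⟨-m, ?_⟩
        have : (m : ℝ) * 1 = r i - r j := by rw [hm]; ring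
        simpa [zsmul_eq_mul] using by push_cast; linarith [this]
    set T : Finset (AddCircle (1 : ℝ)) := Finset.univ.image φ with hT
    set F : Fin n → WithBot ℝ := fun i => degK (a i) + N (b i) with hF
    set g : AddCircle (1 : ℝ) → E :=
      fun q => ∑ i ∈ Finset.univ.filter (fun i => φ i = q), a i • b i with hg
    set S : AddCircle (1 : ℝ) → WithBot ℝ :=
      fun q => (Finset.univ.filter (fun i => φ i = q)).sup F with hS
    -- Step 1: norm of each fiber sum
    have step1 : ∀ q ∈ T, N (g q) = S q := by
      intro q hq
      obtain ⟨i0, _, hi0⟩ := Finset.mem_image.mp hq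
      set a' : Fin n → RatFunc k := fun i => if φ i = q then a i else 0 with ha'
      have hsupp : ∀ i, ¬ (∃ m : ℤ, r i = r i0 + m) → a' i = 0 := by
        intro i hm
        rw [ha']
        simp only
        split_ifs with hf
        · exact absurd ((phi_eq i i0).mp (hf.trans hi0.symm)) hm
        · rfl
      have h1 := h (r i0) a' hsupp
      have hsum : ∑ i, a' i • b i = g q := by
        rw [hg]
        simp only
        rw [Finset.sum_filter]
        refine Finset.sum_congr rfl fun i _ => ?_
        by_cases hf : φ i = q <;> simp [ha', hf]
      have hsup : Finset.univ.sup (fun i => degK (a' i) + N (b i)) = S q := by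
        refine le_antisymm (Finset.sup_le fun i _ => ?_) (Finset.sup_le fun i hi => ?_)
        · by_cases hf : φ i = q
          · rw [ha']
            simp only [if_pos hf]
            exact Finset.le_sup (f := F) (Finset.mem_filter.mpr ⟨Finset.mem_univ i, hf⟩)
          · rw [ha']
            simp [if_neg hf, degK]
        · have hf := (Finset.mem_filter.mp hi).2
          have : F i = degK (a' i) + N (b i) := by rw [ha', hF]; simp [if_pos hf]
          rw [this]
          exact Finset.le_sup (f := fun i => degK (a' i) + N (b i)) (Finset.mem_univ i)
      rw [← hsum, h1, hsup]
    -- Step 2: values in the right coset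
    have step2 : ∀ q ∈ T, N (g q) ≠ ⊥ →
        ∃ x : ℝ, N (g q) = (x : WithBot ℝ) ∧ ((x : AddCircle (1 : ℝ)) = q) := by
      intro q hq hne
      have hSq : S q = (Finset.univ.filter (fun i => φ i = q)).sup F := rfl
      rw [step1 q hq, hSq] at hne
      have hnonempty : (Finset.univ.filter (fun i => φ i = q)).Nonempty := by
        by_contra hemp
        rw [Finset.not_nonempty_iff_eq_empty] at hemp
        rw [hemp, Finset.sup_empty] at hne
        exact hne rfl
      obtain ⟨i, hi, hieq⟩ := Finset.exists_mem_eq_sup _ hnonempty F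
      have hfi : φ i = q := (Finset.mem_filter.mp hi).2
      have hFi : F i = degK (a i) + N (b i) := rfl
      have hai : a i ≠ 0 := by
        intro h0
        rw [hieq, hFi] at hne
        simp [h0, degK] at hne
      refine ⟨(a i).intDegree + r i, ?_, ?_⟩
      · rw [step1 q hq, hSq, hieq, hFi, hr i, degK, if_neg hai]
        push_cast
        rfl
      · rw [← hfi, hφ]
        simp only
        rw [QuotientAddGroup.eq, AddSubgroup.mem_zmultiples_iff]
        refine ⟨-(a i).intDegree, ?_⟩
        push_cast [zsmul_eq_mul]
        ring
    -- Step 3: pairwise distinct or bottom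
    have step3 : ∀ q ∈ T, ∀ q' ∈ T, q ≠ q' → N (g q) = N (g q') → N (g q) = ⊥ := by
      intro q hq q' hq' hne heq
      by_contra hb
      obtain ⟨x, hx, hxq⟩ := step2 q hq hb
      obtain ⟨x', hx', hxq'⟩ := step2 q' hq' (fun h0 => hb (heq.trans h0))
      have : (x : WithBot ℝ) = (x' : WithBot ℝ) := by rw [← hx, ← hx', heq]
      have hxx : x = x' := by exact_mod_cast this
      exact hne (hxq ▸ hxq' ▸ hxx ▸ rfl)
    -- Step 4: combine
    have hfib : ∑ q ∈ T, g q = ∑ i, a i • b i := by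
      rw [hg, hT]
      exact Finset.sum_fiberwise_of_maps_to (fun i _ => Finset.mem_image_of_mem φ (Finset.mem_univ i)) _
    have hmain := key_sum N hadd hneg hzero T g step3
    rw [hfib] at hmain
    rw [hmain]
    have hsupeq : T.sup (fun q => N (g q)) = T.sup S := Finset.sup_congr rfl step1
    rw [hsupeq]
    refine le_antisymm (Finset.sup_le fun q hq => Finset.sup_le fun i hi => ?_)
      (Finset.sup_le fun i _ => ?_)
    · exact Finset.le_sup (f := F) (Finset.mem_univ i)
    · have h1 : F i ≤ S (φ i) :=
        Finset.le_sup (f := F) (s := Finset.univ.filter (fun j => φ j = φ i))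
          (Finset.mem_filter.mpr ⟨Finset.mem_univ i, rfl⟩)
      have h2 : S (φ i) ≤ T.sup S :=
        Finset.le_sup (f := S) (Finset.mem_image_of_mem φ (Finset.mem_univ i))
      exact h1.trans h2
end

section
/- Let E be a normed space over K = k(t), r ∈ ℝ, and V_r = E_{≤r}/E_{<r} (a k-vector space). Let B be a basis of E whose vectors all have norm congruent to r mod ℤ, say ‖b‖ = r - m_b with m_b ∈ ℤ. Then B is reduced if and only if the elements red_r(t^{m_b} b), b ∈ B, are k-linearly independent in V_r; and in that case they form a k-basis of V_r. -/
/-!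
Every `a ∈ k(t)` with `deg a ≤ 0` is a constant `c ∈ k` up to a term of negative degree, and
`c ≠ 0` iff `deg a = 0`. Rescale the basis to `e_i = t^{m_i} b_i`, all of norm `r`. Scaling a
combination `∑ a_i e_i` by a power of `t` so that `max deg a_i = 0`, the leading constants `c_i`
are not all zero and `∑ c_i e_i` differs from `∑ a_i e_i` by a vector of norm `< r`; so the
combination has norm `r`, as reducedness demands, exactly when `∑ c_i e_i` does. Applying the
same decomposition to the coordinates of any `x` with `‖x‖ ≤ r` shows that the `red_r e_i` span
`V_r`.
-/

open RatFunc

section Degree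

variable {k : Type*} [Field k]

theorem degK_zero : degK (0 : RatFunc k) = ⊥ := if_pos rfl

theorem degK_of_ne_zero {a : RatFunc k} (h : a ≠ 0) : degK a = (a.intDegree : ℝ) := if_neg h

theorem degK_mul (a b : RatFunc k) : degK (a * b) = degK a + degK b := by
  by_cases ha : a = 0
  · simp [ha, degK_zero]
  by_cases hb : b = 0
  · simp [hb, degK_zero]
  rw [degK_of_ne_zero ha, degK_of_ne_zero hb, degK_of_ne_zero (mul_ne_zero ha hb),
    intDegree_mul ha hb]
  push_cast
  rfl

theorem degK_C {c : k} (hc : c ≠ 0) : degK (C c) = 0 := by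
  rw [degK_of_ne_zero (by simpa using hc), intDegree_C]
  simp

theorem degK_neg_one : degK (-1 : RatFunc k) = 0 := by
  rw [degK_of_ne_zero (neg_ne_zero.2 one_ne_zero), intDegree_neg, intDegree_one]
  simp

theorem RatFunc.intDegree_X_zpow (z : ℤ) : ((X : RatFunc k) ^ z).intDegree = z := by
  obtain ⟨n, rfl | rfl⟩ := z.eq_nat_or_neg
  all_goals simp [← algebraMap_X, ← map_pow]

theorem degK_X_zpow (z : ℤ) : degK ((X : RatFunc k) ^ z) = (z : ℝ) := by
  rw [degK_of_ne_zero (zpow_ne_zero z X_ne_zero), intDegree_X_zpow]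

theorem exists_degK_sub_C_lt_zero {u : RatFunc k} (hu : degK u ≤ 0) :
    ∃ c : k, degK (u - C c) < 0 := by
  by_cases hu0 : u = 0
  · exact ⟨0, by simp [hu0, degK_zero]⟩
  have hpq : u.num.natDegree ≤ u.denom.natDegree := by
    rw [degK_of_ne_zero hu0] at hu
    have : u.intDegree ≤ 0 := by exact_mod_cast hu
    rw [intDegree] at this
    omega
  set p := u.num
  set q := u.denom
  have hq : q ≠ 0 := u.denom_ne_zero
  -- `u = p / q` with `deg p ≤ deg q`, so the polynomial quotient of `p` by `q` is a constant.
  have hdiv : (p / q).natDegree = 0 := by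
    rw [Polynomial.div_def]
    refine Nat.eq_zero_of_le_zero ((Polynomial.natDegree_C_mul_le _ _).trans ?_)
    rw [Polynomial.natDegree_divByMonic _ (Polynomial.monic_mul_leadingCoeff_inv hq),
      Polynomial.natDegree_mul_C (inv_ne_zero (Polynomial.leadingCoeff_ne_zero.2 hq))]
    omega
  refine ⟨(p / q).coeff 0, ?_⟩
  have hrem : u - C ((p / q).coeff 0) =
      algebraMap _ (RatFunc k) (p % q) / algebraMap _ (RatFunc k) q := by
    have hq' : algebraMap _ (RatFunc k) q ≠ 0 := by simpa using hq
    have hpq' : algebraMap _ (RatFunc k) p =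
        algebraMap _ _ q * algebraMap _ _ (p / q) + algebraMap _ _ (p % q) := by
      rw [← map_mul, ← map_add, EuclideanDomain.div_add_mod]
    rw [← algebraMap_C, ← Polynomial.eq_C_of_natDegree_eq_zero hdiv, eq_div_iff hq']
    nth_rw 1 [← num_div_denom u]
    rw [sub_mul, div_mul_cancel₀ _ hq', hpq']
    ring
  rw [hrem]
  by_cases hr : p % q = 0
  · simp [hr, degK_zero]
  rw [degK_of_ne_zero (div_ne_zero (by simpa using hr) (by simpa using hq)), intDegree_div
    (by simpa using hr) (by simpa using hq), intDegree_polynomial, intDegree_polynomial]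
  have := Polynomial.natDegree_lt_natDegree hr (Polynomial.degree_mod_lt p hq)
  exact_mod_cast (by omega : (p % q).natDegree - (q.natDegree : ℤ) < 0)

end Degree

theorem WithBot.add_coe_le_coe_iff {u : WithBot ℝ} {r : ℝ} : u + r ≤ r ↔ u ≤ 0 := by
  simpa using WithBot.add_le_add_iff_right (x := u) (y := 0) (WithBot.coe_ne_bot (a := r))

theorem WithBot.add_coe_lt_coe_iff {u : WithBot ℝ} {r : ℝ} : u + r < r ↔ u < 0 := by
  simpa using WithBot.add_lt_add_iff_right (x := u) (y := 0) (WithBot.coe_ne_bot (a := r))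

theorem Submodule.span_range_smul_of_ne_zero {K V ι : Type*} [DivisionRing K] [AddCommGroup V]
    [Module K V] {v : ι → V} {u : ι → K} (hu : ∀ i, u i ≠ 0) :
    span K (Set.range fun i => u i • v i) = span K (Set.range v) := by
  apply le_antisymm <;> rw [span_le] <;> rintro _ ⟨i, rfl⟩
  · exact smul_mem _ _ (subset_span ⟨i, rfl⟩)
  · simpa [smul_smul, inv_mul_cancel₀ (hu i)] using
      smul_mem (span K (Set.range fun i => u i • v i)) (u i)⁻¹ (subset_span ⟨i, rfl⟩)

structure IsNonarchimedeanNorm (k : Type*) [Field k] {E : Type*} [AddCommGroup E]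
    [Module (RatFunc k) E] (N : E → WithBot ℝ) : Prop where
  map_add_le : ∀ x y, N (x + y) ≤ max (N x) (N y)
  map_smul : ∀ (a : RatFunc k) (x : E), N (a • x) = degK a + N x

def IsReducedFamily (k : Type*) [Field k] {E ι : Type*} [AddCommGroup E] [Module (RatFunc k) E]
    [Fintype ι] (N : E → WithBot ℝ) (b : ι → E) : Prop :=
  ∀ a : ι → RatFunc k, N (∑ i, a i • b i) = Finset.univ.sup fun i => degK (a i) + N (b i)

/-- The images `red_r (e i)` in `V_r = E_{≤r}/E_{<r}` are `k`-linearly independent. -/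
def LinearIndependentModLt (k : Type*) [Field k] {E ι : Type*} [AddCommGroup E] [Module k E]
    [Fintype ι] (N : E → WithBot ℝ) (r : ℝ) (e : ι → E) : Prop :=
  ∀ c : ι → k, N (∑ i, c i • e i) < r → ∀ i, c i = 0

open Finset

section Reduction

variable {k : Type*} [Field k] {E : Type*} [AddCommGroup E] [Module (RatFunc k) E]
  {N : E → WithBot ℝ} {ι : Type*} [Fintype ι] {r : ℝ} {e : ι → E}

namespace IsNonarchimedeanNorm

theorem map_zero (hN : IsNonarchimedeanNorm k N) : N 0 = ⊥ := by
  simpa [degK_zero] using hN.map_smul 0 0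

theorem map_neg (hN : IsNonarchimedeanNorm k N) (x : E) : N (-x) = N x := by
  rw [← neg_one_smul (RatFunc k) x, hN.map_smul, degK_neg_one, zero_add]

theorem map_sub_le (hN : IsNonarchimedeanNorm k N) (x y : E) :
    N (x - y) ≤ max (N x) (N y) := by
  simpa [sub_eq_add_neg, hN.map_neg] using hN.map_add_le x (-y)

theorem map_sum_le (hN : IsNonarchimedeanNorm k N) {κ : Type*} (s : Finset κ) (f : κ → E) :
    N (∑ i ∈ s, f i) ≤ s.sup fun i => N (f i) := by
  classical
  induction s using Finset.induction_on with
  | empty => simp [hN.map_zero]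
  | insert i s hi ih =>
    rw [sum_insert hi, sup_insert]
    exact (hN.map_add_le _ _).trans (max_le_max le_rfl ih)

theorem map_sum_smul_le (hN : IsNonarchimedeanNorm k N) (a : ι → RatFunc k) (b : ι → E) :
    N (∑ i, a i • b i) ≤ univ.sup fun i => degK (a i) + N (b i) := by
  simpa only [hN.map_smul] using hN.map_sum_le univ fun i => a i • b i

theorem map_sum_smul_lt (hN : IsNonarchimedeanNorm k N) (he : ∀ i, N (e i) = r)
    {d : ι → RatFunc k} (hd : ∀ i, degK (d i) < 0) : N (∑ i, d i • e i) < r :=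
  (hN.map_sum_smul_le d e).trans_lt <| (Finset.sup_lt_iff (WithBot.bot_lt_coe r)).2 fun i _ => by
    rw [he i]
    exact WithBot.add_coe_lt_coe_iff.2 (hd i)

end IsNonarchimedeanNorm

theorem IsReducedFamily.smul (hN : IsNonarchimedeanNorm k N) {b : ι → E}
    (h : IsReducedFamily k N b) (u : ι → RatFunc k) :
    IsReducedFamily k N fun i => u i • b i := by
  intro a
  simp only [smul_smul, hN.map_smul, ← add_assoc, ← degK_mul]
  exact h fun i => a i * u i

theorem isReducedFamily_smul_iff (hN : IsNonarchimedeanNorm k N) {b : ι → E}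
    {u : ι → RatFunc k} (hu : ∀ i, u i ≠ 0) :
    IsReducedFamily k N (fun i => u i • b i) ↔ IsReducedFamily k N b :=
  ⟨fun h => by simpa [smul_smul, inv_mul_cancel₀ (hu _)] using h.smul hN fun i => (u i)⁻¹,
    fun h => h.smul hN u⟩

variable [Module k E] [IsScalarTower k (RatFunc k) E]

theorem C_smul_eq_smul (c : k) (x : E) : C c • x = c • x := by
  rw [← algebraMap_eq_C, algebraMap_smul]

theorem sum_smul_sub_C_smul (a : ι → RatFunc k) (c : ι → k) (e : ι → E) :
    ∑ i, a i • e i - ∑ i, c i • e i = ∑ i, (a i - C (c i)) • e i := by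
  simp only [sub_smul, sum_sub_distrib, C_smul_eq_smul]

theorem IsReducedFamily.linearIndependentModLt (h : IsReducedFamily k N e)
    (he : ∀ i, N (e i) = r) :
    LinearIndependentModLt k N r e := by
  intro c hc i
  by_contra hci
  simp only [← C_smul_eq_smul (E := E), h fun i => C (c i)] at hc
  refine hc.not_ge (le_trans ?_ (Finset.le_sup (mem_univ i)))
  simp [he i, degK_C hci]

theorem le_map_sum_smul_of_degK_le_zero (hN : IsNonarchimedeanNorm k N) (he : ∀ i, N (e i) = r)
    (hind : LinearIndependentModLt k N r e) {a : ι → RatFunc k} (ha : ∀ i, degK (a i) ≤ 0)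
    {j : ι} (hj : degK (a j) = 0) : (r : WithBot ℝ) ≤ N (∑ i, a i • e i) := by
  choose c hc using fun i => exists_degK_sub_C_lt_zero (ha i)
  have hcj : c j ≠ 0 := by
    intro h0
    simpa [h0, hj] using hc j
  have hlow : (r : WithBot ℝ) ≤ N (∑ i, c i • e i) := not_lt.1 fun hlt => hcj (hind c hlt j)
  rw [← sub_sub_cancel (∑ i, a i • e i) (∑ i, c i • e i), sum_smul_sub_C_smul] at hlow
  rcases le_max_iff.1 (hlow.trans (hN.map_sub_le _ _)) with h | h
  · exact h
  · exact absurd h (hN.map_sum_smul_lt he hc).not_ge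

theorem LinearIndependentModLt.isReducedFamily (hN : IsNonarchimedeanNorm k N)
    (he : ∀ i, N (e i) = r) (hind : LinearIndependentModLt k N r e) : IsReducedFamily k N e := by
  intro a
  refine le_antisymm (hN.map_sum_smul_le a e) (Finset.sup_le fun i _ => ?_)
  obtain ⟨j, -, hj⟩ := exists_max_image univ (fun i => degK (a i)) ⟨i, mem_univ i⟩
  by_cases haj : a j = 0
  · have hai : degK (a i) ≤ ⊥ := by simpa [haj, degK_zero] using hj i (mem_univ i)
    simp [le_bot_iff.1 hai]
  set s := (a j).intDegree
  have hdeg : ∀ i, degK ((X : RatFunc k) ^ (-s) * a i) = ((-s : ℤ) : ℝ) + degK (a i) :=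
    fun i => by rw [degK_mul, degK_X_zpow]
  have hj0 : ((-s : ℤ) : ℝ) + degK (a j) = 0 := by
    rw [degK_of_ne_zero haj, ← WithBot.coe_add]
    simp [s]
  have hle : (r : WithBot ℝ) ≤ N (∑ i, ((X : RatFunc k) ^ (-s) * a i) • e i) := by
    refine le_map_sum_smul_of_degK_le_zero hN he hind (fun i => ?_) ((hdeg j).trans hj0)
    rw [hdeg, ← hj0]
    gcongr
    exact hj i (mem_univ i)
  have hsum :
      ∑ i, a i • e i = (X : RatFunc k) ^ s • ∑ i, ((X : RatFunc k) ^ (-s) * a i) • e i := by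
    have hXs : (X : RatFunc k) ^ s ≠ 0 := zpow_ne_zero s X_ne_zero
    simp [smul_sum, smul_smul, ← mul_assoc, zpow_neg, mul_inv_cancel₀ hXs]
  calc degK (a i) + N (e i) ≤ degK (a j) + r := by rw [he i]; gcongr; exact hj i (mem_univ i)
    _ = (s : ℝ) + r := by rw [degK_of_ne_zero haj]
    _ ≤ (s : ℝ) + N (∑ i, ((X : RatFunc k) ^ (-s) * a i) • e i) := by gcongr
    _ = N (∑ i, a i • e i) := by rw [hsum, hN.map_smul, degK_X_zpow]

theorem IsReducedFamily.exists_map_sub_sum_smul_lt (hN : IsNonarchimedeanNorm k N)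
    (h : IsReducedFamily k N e) (he : ∀ i, N (e i) = r) {x : E}
    (hx : x ∈ Submodule.span (RatFunc k) (Set.range e)) (hxr : N x ≤ r) :
    ∃ c : ι → k, N (x - ∑ i, c i • e i) < r := by
  obtain ⟨a, rfl⟩ := (Submodule.mem_span_range_iff_exists_fun (RatFunc k)).1 hx
  have ha : ∀ i, degK (a i) ≤ 0 := fun i => by
    have hi := (Finset.le_sup (f := fun i => degK (a i) + N (e i)) (mem_univ i)).trans
      ((h a).symm.le.trans hxr)
    rwa [he i, WithBot.add_coe_le_coe_iff] at hi
  choose c hc using fun i => exists_degK_sub_C_lt_zero (ha i)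
  exact ⟨c, sum_smul_sub_C_smul a c e ▸ hN.map_sum_smul_lt he hc⟩

end Reduction

theorem stmt10_general {k : Type*} [Field k] {E : Type*} [AddCommGroup E]
    [Module (RatFunc k) E] [Module k E]
    [IsScalarTower k (RatFunc k) E]
    (N : E → WithBot ℝ)
    (hadd : ∀ x y : E, N (x + y) ≤ max (N x) (N y))
    (hsmul : ∀ (a : RatFunc k) (x : E), N (a • x) = degK a + N x)
    (n : ℕ) (b : Fin n → E)
    (hbasis : LinearIndependent (RatFunc k) b ∧
      Submodule.span (RatFunc k) (Set.range b) = ⊤)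
    (rr : ℝ) (m : Fin n → ℤ)
    (hr : ∀ i, N (b i) = ((rr - (m i : ℝ) : ℝ) : WithBot ℝ))
    (t : RatFunc k) (ht : t = (algebraMap (Polynomial k) (RatFunc k)) Polynomial.X) :
    ((∀ a : Fin n → RatFunc k,
        N (∑ i, a i • b i) = Finset.univ.sup (fun i => degK (a i) + N (b i))) ↔
      (∀ c : Fin n → k,
        N (∑ i, c i • ((t ^ (m i)) • b i)) < ((rr : ℝ) : WithBot ℝ) → ∀ i, c i = 0)) ∧
    ((∀ a : Fin n → RatFunc k,
        N (∑ i, a i • b i) = Finset.univ.sup (fun i => degK (a i) + N (b i))) →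
      ∀ x : E, N x ≤ ((rr : ℝ) : WithBot ℝ) →
        ∃ c : Fin n → k,
          N (x - ∑ i, c i • ((t ^ (m i)) • b i)) < ((rr : ℝ) : WithBot ℝ)) := by
  have hN : IsNonarchimedeanNorm k N := ⟨hadd, hsmul⟩
  rw [algebraMap_X] at ht
  subst ht
  have hX : ∀ i, (X : RatFunc k) ^ m i ≠ 0 := fun i => zpow_ne_zero _ X_ne_zero
  have he : ∀ i, N (X ^ m i • b i) = rr := fun i => by
    rw [hsmul, degK_X_zpow, hr, ← WithBot.coe_add, add_sub_cancel]
  have hred : IsReducedFamily k N b ↔ IsReducedFamily k N fun i => X ^ m i • b i :=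
    (isReducedFamily_smul_iff hN hX).symm
  have hspan : Submodule.span (RatFunc k) (Set.range fun i => X ^ m i • b i) = ⊤ :=
    (Submodule.span_range_smul_of_ne_zero hX).trans hbasis.2
  exact ⟨hred.trans ⟨fun h => h.linearIndependentModLt he,
      fun h => LinearIndependentModLt.isReducedFamily hN he h⟩,
    fun h x hx => (hred.1 h).exists_map_sub_sum_smul_lt hN he (hspan ▸ Submodule.mem_top) hx⟩

/-- (Schmidt's criterion.) Let `b₁,…,b_n` be a basis of `E` whose norms
are all `≡ r mod ℤ`, with `‖b_i‖ = r - m_i`.  Then the basis is reduced iff the images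
`red_r (t^{m_i} • b_i)` are `k`-linearly independent in `V_r = E_{≤r}/E_{<r}` (i.e. no
nontrivial `k`-combination of the `t^{m_i} • b_i` has norm `< r`), and in that case they
form a `k`-basis of `V_r` (every element of `E_{≤r}` is within `E_{<r}` of a
`k`-combination). -/
theorem stmt10 {k : Type*} [Field k] {E : Type*} [AddCommGroup E]
    [Module (RatFunc k) E] [Module (Polynomial k) E] [Module k E]
    [IsScalarTower (Polynomial k) (RatFunc k) E] [IsScalarTower k (RatFunc k) E]
    (N : E → WithBot ℝ)
    (hadd : ∀ x y : E, N (x + y) ≤ max (N x) (N y))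
    (hsmul : ∀ (a : RatFunc k) (x : E), N (a • x) = degK a + N x)
    (hzero : ∀ x : E, N x = ⊥ ↔ x = 0)
    (hlat : ∃ s : Finset E, Submodule.span (RatFunc k) (s : Set E) = ⊤ ∧
      ∀ r : ℝ, ∃ S : Finset E,
        {x : E | x ∈ Submodule.span (Polynomial k) (s : Set E) ∧ N x ≤ (r : ℝ)} ⊆
          (Submodule.span k (S : Set E) : Set E))
    (n : ℕ) (b : Fin n → E)
    (hbasis : LinearIndependent (RatFunc k) b ∧
      Submodule.span (RatFunc k) (Set.range b) = ⊤)
    (rr : ℝ) (m : Fin n → ℤ)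
    (hr : ∀ i, N (b i) = ((rr - (m i : ℝ) : ℝ) : WithBot ℝ))
    (t : RatFunc k) (ht : t = (algebraMap (Polynomial k) (RatFunc k)) Polynomial.X) :
    ((∀ a : Fin n → RatFunc k,
        N (∑ i, a i • b i) = Finset.univ.sup (fun i => degK (a i) + N (b i))) ↔
      (∀ c : Fin n → k,
        N (∑ i, c i • ((t ^ (m i)) • b i)) < ((rr : ℝ) : WithBot ℝ) → ∀ i, c i = 0)) ∧
    ((∀ a : Fin n → RatFunc k,
        N (∑ i, a i • b i) = Finset.univ.sup (fun i => degK (a i) + N (b i))) →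
      ∀ x : E, N x ≤ ((rr : ℝ) : WithBot ℝ) →
        ∃ c : Fin n → k,
          N (x - ∑ i, c i • ((t ^ (m i)) • b i)) < ((rr : ℝ) : WithBot ℝ)) :=
  stmt10_general N hadd hsmul n b hbasis rr m hr t ht
end
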